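/- arXiv:1602.03793 — 4 statements merged into one kernel-verified Lean document; each statement's English description precedes it below -/
import Mathlib

section
/- Let G be a group and let φ : G → ℝ be a quasimorphism of defect at most 1 which is constant on conjugacy classes (φ(g*x*g⁻¹) = φ(x) for all g, x) and satisfies φ(x⁻¹) = −φ(x) for all x. Then for every g ≥ 1 and all elements x₁, y₁, …, x_g, y_g ∈ G, the product of commutators satisfies |φ(⁅x₁, y₁⁆ * ⁅x₂, y₂⁆ * ⋯ * ⁅x_g, y_g⁆)| ≤ 2g − 1. (This is the quasimorphism computation underlying the Milnor–Wood inequality: for a compact orientable surface S of genus g with one boundary component, the boundary class δ = ⁅α₁,β₁⁆⋯⁅α_g,β_g⁆ satisfies |φ(δ)| ≤ −χ(S) = 2g − 1.) -/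
/-- Milnor–Wood type bound: a conjugacy-invariant, inversion-antisymmetric quasimorphism
of defect at most 1 is bounded by `2g - 1` on a product of `g` commutators. -/
theorem quasimorphism_prod_commutators_bound
    {G : Type*} [Group G] (φ : G → ℝ)
    (hquasi : ∀ x y : G, |φ (x * y) - φ x - φ y| ≤ 1)
    (hconj : ∀ g x : G, φ (g * x * g⁻¹) = φ x)
    (hinv : ∀ x : G, φ x⁻¹ = -φ x) :
    ∀ (g : ℕ), 1 ≤ g → ∀ x y : Fin g → G,
      |φ (List.ofFn (fun i => x i * y i * (x i)⁻¹ * (y i)⁻¹)).prod| ≤ 2 * (g : ℝ) - 1 := by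
  -- each commutator has |φ| ≤ 1
  have hcomm : ∀ a b : G, |φ (a * b * a⁻¹ * b⁻¹)| ≤ 1 := by
    intro a b
    have h := hquasi (a * b * a⁻¹) b⁻¹
    rw [hinv b] at h
    have hc : φ (a * b * a⁻¹) = φ b := hconj a b
    rw [hc] at h
    calc |φ (a * b * a⁻¹ * b⁻¹)| = |φ (a * b * a⁻¹ * b⁻¹) - φ b - -φ b| := by ring_nf
      _ ≤ 1 := h
  have hlist : ∀ L : List G, (∀ a ∈ L, |φ a| ≤ 1) → L ≠ [] →
      |φ L.prod| ≤ 2 * (L.length : ℝ) - 1 := by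
    intro L
    induction L with
    | nil => intro _ h; exact absurd rfl h
    | cons a t ih =>
      intro hmem _
      rcases t with _ | ⟨b, t⟩
      · have := hmem a (by simp); simp only [List.prod_cons, List.prod_nil, mul_one, List.length_cons, List.length_nil]; push_cast; linarith
      · have ha : |φ a| ≤ 1 := hmem a (by simp)
        have ht : |φ ((b :: t).prod)| ≤ 2 * ((b :: t).length : ℝ) - 1 :=
          ih (fun x hx => hmem x (List.mem_cons_of_mem a hx)) (by simp)
        have hq := hquasi a (b :: t).prod
        have : |φ ((a :: b :: t).prod)| ≤ |φ a| + |φ ((b :: t).prod)| + 1 := by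
          rw [List.prod_cons]
          have := abs_sub_abs_le_abs_sub (φ (a * (b :: t).prod)) (φ a + φ (b :: t).prod)
          have h2 : |φ a + φ (b :: t).prod| ≤ |φ a| + |φ (b :: t).prod| := abs_add_le _ _
          have h3 : |φ (a * (b :: t).prod) - (φ a + φ (b :: t).prod)| ≤ 1 := by
            simpa [sub_sub] using hquasi a (b :: t).prod
          linarith
        have hlen : ((a :: b :: t).length : ℝ) = ((b :: t).length : ℝ) + 1 := by
          push_cast [List.length_cons]; ring
        rw [hlen]; linarith
  intro g hg x y
  have hmem : ∀ a ∈ List.ofFn (fun i => x i * y i * (x i)⁻¹ * (y i)⁻¹), |φ a| ≤ 1 := by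
    intro a ha
    rw [List.mem_ofFn] at ha
    obtain ⟨i, rfl⟩ := ha
    exact hcomm _ _
  have hne : List.ofFn (fun i => x i * y i * (x i)⁻¹ * (y i)⁻¹) ≠ [] := by
    simp [List.ofFn_eq_nil_iff]; omega
  have := hlist _ hmem hne
  simpa using this
end

section
/- The translation number is a quasimorphism of defect at most 1 on the group of lifts of orientation-preserving circle homeomorphisms: for all invertible circle degree one lifts f and g (i.e., units of the monoid of circle degree one lifts), |τ(f*g) − τ(f) − τ(g)| ≤ 1, where τ denotes the translation number. -/
open CircleDeg1Lift

private lemma commute_translate_int (f : CircleDeg1Lift) (n : ℤ) :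
    Commute f ((translate (Multiplicative.ofAdd (n : ℝ)) : CircleDeg1Liftˣ) : CircleDeg1Lift) := by
  ext x
  simp [CircleDeg1Lift.mul_apply, translate_apply, f.map_int_add]

private lemma key_norm (f g : CircleDeg1Liftˣ)
    (hf0 : 0 ≤ translationNumber (f : CircleDeg1Lift))
    (hf1 : translationNumber (f : CircleDeg1Lift) < 1)
    (hg0 : 0 ≤ translationNumber (g : CircleDeg1Lift))
    (hg1 : translationNumber (g : CircleDeg1Lift) < 1) :
    translationNumber ((f * g : CircleDeg1Liftˣ) : CircleDeg1Lift)
      ≤ translationNumber (f : CircleDeg1Lift) + translationNumber (g : CircleDeg1Lift) + 1 := by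
  by_contra hcon
  push_neg at hcon
  set F : CircleDeg1Lift := (f : CircleDeg1Lift)
  set G : CircleDeg1Lift := (g : CircleDeg1Lift)
  have hFG : ((f * g : CircleDeg1Liftˣ) : CircleDeg1Lift) = F * G := rfl
  -- upper bound 2
  have hf' : ∀ x, F x < x + 1 := by
    intro x
    have := F.map_lt_of_translationNumber_lt_nat (n := 1) (by exact_mod_cast hf1) x
    simpa using this
  have hg' : ∀ x, G x < x + 1 := by
    intro x
    have := G.map_lt_of_translationNumber_lt_nat (n := 1) (by exact_mod_cast hg1) x
    simpa using this
  have h2 : translationNumber (F * G) ≤ 2 := by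
    apply translationNumber_le_of_le_add
    intro x
    have h1 := hf' (G x)
    have h2 := hg' x
    rw [CircleDeg1Lift.mul_apply]
    linarith
  -- since τ(FG) > 1, ∀ x, x + 1 < F (G x)
  have h1lt : (1 : ℝ) < translationNumber (F * G) := by
    rw [← hFG] at *
    linarith
  have hstep : ∀ x, ((f⁻¹ : CircleDeg1Liftˣ) : CircleDeg1Lift) (1 + x) ≤ G x := by
    intro x
    have hx : x + (1 : ℤ) < (F * G) x :=
      (F * G).lt_map_of_int_lt_translationNumber (by exact_mod_cast h1lt) x
    rw [CircleDeg1Lift.mul_apply] at hx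
    have := ((f⁻¹ : CircleDeg1Liftˣ) : CircleDeg1Lift).mono
      (le_of_lt (show (1 : ℝ) + x < F (G x) by push_cast at hx; linarith))
    calc ((f⁻¹ : CircleDeg1Liftˣ) : CircleDeg1Lift) (1 + x)
        ≤ ((f⁻¹ : CircleDeg1Liftˣ) : CircleDeg1Lift) (F (G x)) := this
      _ = G x := CircleDeg1Lift.units_inv_apply_apply f (G x)
  -- hence τ g ≥ 1 - τ f
  have hmono : translationNumber
      (((f⁻¹ : CircleDeg1Liftˣ) : CircleDeg1Lift) *
        ((translate (Multiplicative.ofAdd (1 : ℝ)) : CircleDeg1Liftˣ) : CircleDeg1Lift))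
      ≤ translationNumber G := by
    apply translationNumber_mono
    intro x
    rw [CircleDeg1Lift.mul_apply, CircleDeg1Lift.translate_apply]
    exact hstep x
  have hcommute : Commute ((f⁻¹ : CircleDeg1Liftˣ) : CircleDeg1Lift)
      ((translate (Multiplicative.ofAdd (1 : ℝ)) : CircleDeg1Liftˣ) : CircleDeg1Lift) := by
    have := commute_translate_int ((f⁻¹ : CircleDeg1Liftˣ) : CircleDeg1Lift) 1
    simpa using this
  have hτ : translationNumber
      (((f⁻¹ : CircleDeg1Liftˣ) : CircleDeg1Lift) *
        ((translate (Multiplicative.ofAdd (1 : ℝ)) : CircleDeg1Liftˣ) : CircleDeg1Lift))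
      = -translationNumber F + 1 := by
    rw [translationNumber_mul_of_commute hcommute, translationNumber_units_inv,
      translationNumber_translate]
  rw [hτ] at hmono
  rw [← hFG] at h2
  linarith

private lemma key (f g : CircleDeg1Liftˣ) :
    translationNumber ((f * g : CircleDeg1Liftˣ) : CircleDeg1Lift)
      ≤ translationNumber (f : CircleDeg1Lift) + translationNumber (g : CircleDeg1Lift) + 1 := by
  set a : ℤ := ⌊translationNumber (f : CircleDeg1Lift)⌋
  set b : ℤ := ⌊translationNumber (g : CircleDeg1Lift)⌋
  set Ta : CircleDeg1Liftˣ := translate (Multiplicative.ofAdd ((-a : ℤ) : ℝ))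
  set Tb : CircleDeg1Liftˣ := translate (Multiplicative.ofAdd ((-b : ℤ) : ℝ))
  have hcommg : Commute (g : CircleDeg1Lift) (Ta : CircleDeg1Lift) :=
    commute_translate_int _ _
  have hτa : translationNumber ((f * Ta : CircleDeg1Liftˣ) : CircleDeg1Lift)
      = translationNumber (f : CircleDeg1Lift) - a := by
    rw [Units.val_mul, translationNumber_mul_of_commute (commute_translate_int _ _),
      translationNumber_translate]
    push_cast; ring
  have hτb : translationNumber ((g * Tb : CircleDeg1Liftˣ) : CircleDeg1Lift)
      = translationNumber (g : CircleDeg1Lift) - b := by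
    rw [Units.val_mul, translationNumber_mul_of_commute (commute_translate_int _ _),
      translationNumber_translate]
    push_cast; ring
  have hprod : (f * Ta) * (g * Tb) = (f * g) * (Ta * Tb) := by
    have : Ta * g = g * Ta := by
      ext x
      have := hcommg
      rw [Commute, SemiconjBy] at this
      exact congrArg (fun h : CircleDeg1Lift => h x) this.symm
    rw [mul_assoc, ← mul_assoc Ta g Tb, this, mul_assoc, ← mul_assoc, ← mul_assoc]
  have hTaTb : Ta * Tb = translate (Multiplicative.ofAdd (((-a - b : ℤ)) : ℝ)) := by
    rw [← MonoidHom.map_mul]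
    congr 1
    push_cast
    rw [← ofAdd_add]
    ring_nf
  have hτprod : translationNumber (((f * Ta) * (g * Tb) : CircleDeg1Liftˣ) : CircleDeg1Lift)
      = translationNumber ((f * g : CircleDeg1Liftˣ) : CircleDeg1Lift) - a - b := by
    rw [hprod, hTaTb, Units.val_mul,
      translationNumber_mul_of_commute (commute_translate_int _ _),
      translationNumber_translate]
    push_cast; ring
  have h := key_norm (f * Ta) (g * Tb)
    (by rw [hτa]; have := Int.floor_le (translationNumber (f : CircleDeg1Lift)); linarith)
    (by rw [hτa]; have := Int.lt_floor_add_one (translationNumber (f : CircleDeg1Lift)); linarith)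
    (by rw [hτb]; have := Int.floor_le (translationNumber (g : CircleDeg1Lift)); linarith)
    (by rw [hτb]; have := Int.lt_floor_add_one (translationNumber (g : CircleDeg1Lift)); linarith)
  rw [hτprod, hτa, hτb] at h
  linarith

/-- The translation number is a quasimorphism of defect at most 1 on the group of
invertible circle degree one lifts. -/
theorem translationNumber_quasimorphism_defect_one
    (f g : CircleDeg1Liftˣ) :
    |CircleDeg1Lift.translationNumber ((f * g : CircleDeg1Liftˣ) : CircleDeg1Lift)
      - CircleDeg1Lift.translationNumber (f : CircleDeg1Lift)
      - CircleDeg1Lift.translationNumber (g : CircleDeg1Lift)| ≤ 1 := by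
  have hup := key f g
  have hdown := key g⁻¹ f⁻¹
  have hinv : (g⁻¹ * f⁻¹ : CircleDeg1Liftˣ) = (f * g)⁻¹ := by rw [mul_inv_rev]
  rw [hinv] at hdown
  rw [translationNumber_units_inv, translationNumber_units_inv, translationNumber_units_inv]
    at hdown
  rw [abs_le]
  constructor <;> linarith
end

section
/- Milnor–Wood bound for translation numbers: for every g ≥ 1 and all invertible circle degree one lifts f₁, h₁, …, f_g, h_g (units of the monoid of circle degree one lifts), the translation number of the product of commutators satisfies |τ(⁅f₁, h₁⁆ * ⁅f₂, h₂⁆ * ⋯ * ⁅f_g, h_g⁆)| ≤ 2g − 1, where ⁅f, h⁆ = f*h*f⁻¹*h⁻¹. (Consequently, for any homomorphism ρ from the fundamental group of a compact orientable genus-g surface with one boundary component into the group of lifts of orientation-preserving circle homeomorphisms, the boundary generator δ satisfies |τ(ρ(δ))| ≤ −χ(S) = 2g − 1.) -/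
/-!
On invertible lifts the translation number is a quasimorphism of defect 1: if `n` is the least
integer above `τ (f * g)`, then `(f * g) x < x + n` for all `x`, so `f ≤ translate n * g⁻¹`, and
`τ` is monotone and additive on the commuting pair `translate n`, `g⁻¹`. Since `τ` is conjugation
invariant and odd, each commutator has `|τ| ≤ 1`, and multiplying `g` of them costs a further
defect of at most `g - 1`.
-/

open CircleDeg1Lift
open scoped commutatorElement

namespace CircleDeg1Lift

local notation "τ" => translationNumber

theorem translationNumber_add_le_translationNumber_mul_add_one (f g : CircleDeg1Liftˣ) :
    τ f + τ g ≤ τ ↑(f * g) + 1 := by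
  obtain ⟨n, hlt, hle⟩ : ∃ n : ℤ, τ ↑(f * g) < n ∧ (n : ℝ) ≤ τ ↑(f * g) + 1 :=
    ⟨⌊τ ↑(f * g)⌋ + 1, by rw [Int.cast_add, Int.cast_one]; exact Int.lt_floor_add_one _,
      by rw [Int.cast_add, Int.cast_one]; linarith [Int.floor_le (τ ↑(f * g))]⟩
  have hf_le : (f : CircleDeg1Lift) ≤ ↑(translate (Multiplicative.ofAdd (n : ℝ)) * g⁻¹) := by
    intro x
    have := map_lt_of_translationNumber_lt_int _ hlt (((g⁻¹ : CircleDeg1Liftˣ) : CircleDeg1Lift) x)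
    simp only [Units.val_mul, mul_apply, units_apply_inv_apply, translate_apply] at this ⊢
    linarith
  have hcomm : Commute (translate (Multiplicative.ofAdd (n : ℝ)) : CircleDeg1Lift) ↑g⁻¹ := by
    ext x
    simp only [mul_apply, translate_apply, map_int_add]
  have hτ := translationNumber_mono hf_le
  rw [Units.val_mul, translationNumber_mul_of_commute hcomm, translationNumber_translate,
    translationNumber_units_inv] at hτ
  linarith

theorem abs_translationNumber_mul_sub_le_one (f g : CircleDeg1Liftˣ) :
    |τ ↑(f * g) - τ f - τ g| ≤ 1 := by
  have hupper := translationNumber_add_le_translationNumber_mul_add_one g⁻¹ f⁻¹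
  rw [← mul_inv_rev, translationNumber_units_inv, translationNumber_units_inv,
    translationNumber_units_inv] at hupper
  rw [abs_le]
  constructor <;> linarith [translationNumber_add_le_translationNumber_mul_add_one f g]

theorem abs_translationNumber_commutatorElement_le_one (f g : CircleDeg1Liftˣ) :
    |τ ↑⁅f, g⁆| ≤ 1 := by
  have hconj : τ ↑(f * g * f⁻¹) = τ g := by
    simpa only [Units.val_mul, mul_assoc] using translationNumber_conj_eq f g
  simpa [commutatorElement_def, hconj, translationNumber_units_inv] using
    abs_translationNumber_mul_sub_le_one (f * g * f⁻¹) g⁻¹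

theorem abs_translationNumber_prod_ofFn_sub_sum_le {n : ℕ} (u : Fin (n + 1) → CircleDeg1Liftˣ) :
    |τ ↑(List.ofFn u).prod - ∑ i, τ ↑(u i)| ≤ n := by
  induction n with
  | zero => simp
  | succ n ih =>
    set P := (List.ofFn fun i => u i.succ).prod
    have hhead : |τ ↑(u 0 * P) - τ ↑(u 0) - τ ↑P| ≤ 1 := abs_translationNumber_mul_sub_le_one _ _
    have htail : |τ ↑P - ∑ i : Fin (n + 1), τ ↑(u i.succ)| ≤ n := ih fun i => u i.succ
    rw [List.ofFn_succ, List.prod_cons, Fin.sum_univ_succ, Nat.cast_succ]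
    calc |τ ↑(u 0 * P) - (τ ↑(u 0) + ∑ i : Fin (n + 1), τ ↑(u i.succ))|
        = |(τ ↑(u 0 * P) - τ ↑(u 0) - τ ↑P) + (τ ↑P - ∑ i : Fin (n + 1), τ ↑(u i.succ))| := by
          ring_nf
      _ ≤ n + 1 := (abs_add_le _ _).trans (by linarith)

end CircleDeg1Lift

/-- Milnor–Wood bound for translation numbers: the translation number of a product of
`g` commutators of invertible circle degree one lifts is at most `2g - 1` in absolute value. -/
theorem translationNumber_prod_commutators_bound
    (g : ℕ) (hg : 1 ≤ g) (f h : Fin g → CircleDeg1Liftˣ) :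
    |CircleDeg1Lift.translationNumber
        (((List.ofFn (fun i => ⁅f i, h i⁆)).prod : CircleDeg1Liftˣ) : CircleDeg1Lift)|
      ≤ 2 * (g : ℝ) - 1 := by
  obtain ⟨k, rfl⟩ := Nat.exists_eq_add_of_le' hg
  have hdefect := abs_translationNumber_prod_ofFn_sub_sum_le fun i => ⁅f i, h i⁆
  have hsum : |∑ i, translationNumber ↑⁅f i, h i⁆| ≤ k + 1 := by
    refine (Finset.abs_sum_le_sum_abs _ _).trans ?_
    simpa using Finset.sum_le_sum fun i (_ : i ∈ Finset.univ) =>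
      abs_translationNumber_commutatorElement_le_one (f i) (h i)
  push_cast
  linarith [abs_sub_abs_le_abs_sub (translationNumber ↑(List.ofFn fun i => ⁅f i, h i⁆).prod)
    (∑ i, translationNumber ↑⁅f i, h i⁆)]
end

section
/- Quantitative step of the Agol–Futer lemma: let k > 0 and let A ⊆ ℝ² be a connected set containing points (x₀, y₀) and (x₁, y₁) with y₀ < y₁ < 0 and |x₁ − x₀| < k. Then for every real r with 0 < r < (y₁ − y₀)/(2k), there exists an integer n such that the translate A + (n·k, 0) = {(x + n·k, y) : (x, y) ∈ A} intersects the line L_r = {(x, y) ∈ ℝ² : y = −r·x}. In particular, any subset of ℝ² that contains A and is invariant under the translation (x, y) ↦ (x + k, y) meets L_r for all such r. -/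
/-! The function `g (x, y) = y + r x` is constant on each translate `L_r - (n k, 0)` of the line,
with value `-n r k`. Along the connected set `A` it takes every value between
`g (x₀, y₀)` and `g (x₁, y₁)`, and the hypothesis on `r` makes these two values at least
`r k` apart, so some multiple of `r k` lies between them. -/

open Set

lemma exists_int_mul_mem_Icc {a b d : ℝ} (hd : 0 < d) (h : a + d ≤ b) :
    ∃ n : ℤ, (n : ℝ) * d ∈ Icc a b := by
  refine ⟨⌈a / d⌉, (div_le_iff₀ hd).mp (Int.le_ceil _), ?_⟩
  calc (⌈a / d⌉ : ℝ) * d ≤ (a / d + 1) * d := by gcongr; exact (Int.ceil_lt_add_one _).le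
    _ = a + d := by field_simp
    _ ≤ b := h

lemma IsPreconnected.exists_int_translate_mem_line {A : Set (ℝ × ℝ)} (hA : IsPreconnected A)
    {r k x₀ y₀ x₁ y₁ : ℝ} (hr : 0 < r) (hk : 0 < k) (h₀ : (x₀, y₀) ∈ A) (h₁ : (x₁, y₁) ∈ A)
    (hgap : y₀ + r * x₀ + r * k ≤ y₁ + r * x₁) :
    ∃ n : ℤ, ∃ q ∈ A, q.2 = -r * (q.1 + n * k) := by
  obtain ⟨n, hn⟩ := exists_int_mul_mem_Icc (mul_pos hr hk) hgap
  have hg : Continuous fun q : ℝ × ℝ => q.2 + r * q.1 := by fun_prop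
  obtain ⟨q, hqA, hq⟩ := hA.intermediate_value h₀ h₁ hg.continuousOn hn
  exact ⟨-n, q, hqA, by push_cast; linear_combination hq⟩

lemma periodic_mem_of_forall_mem_iff {α β : Type*} [Add α] [AddZeroClass β] {S : Set (α × β)}
    {k : α} (hS : ∀ q : α × β, q ∈ S ↔ (q.1 + k, q.2) ∈ S) :
    Function.Periodic (· ∈ S) ((k, 0) : α × β) := fun q => by
  have hq : q + (k, 0) = (q.1 + k, q.2) := Prod.ext rfl (add_zero q.2)
  exact hq ▸ propext (hS q).symm

theorem agol_futer_quantitative_general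
    (k : ℝ) (hk : 0 < k) (A : Set (ℝ × ℝ)) (hA : IsConnected A)
    (x₀ y₀ x₁ y₁ : ℝ) (h₀ : (x₀, y₀) ∈ A) (h₁ : (x₁, y₁) ∈ A)
    (hx : |x₁ - x₀| < k) :
    ∀ r : ℝ, 0 < r → r < (y₁ - y₀) / (2 * k) →
      (∃ n : ℤ, ∃ q ∈ A, q.2 = -r * (q.1 + n * k)) ∧
      (∀ S : Set (ℝ × ℝ), A ⊆ S → (∀ q : ℝ × ℝ, q ∈ S ↔ (q.1 + k, q.2) ∈ S) →
        ∃ q ∈ S, q.2 = -r * q.1) := by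
  intro r hr hrlt
  have hdrop : r * (2 * k) < y₁ - y₀ := (lt_div_iff₀ (by positivity)).mp hrlt
  have hshift : r * (x₀ - x₁) < r * k := mul_lt_mul_of_pos_left (abs_sub_lt_iff.mp hx).2 hr
  obtain ⟨n, q, hqA, hq⟩ :=
    hA.isPreconnected.exists_int_translate_mem_line hr hk h₀ h₁ (by linarith)
  refine ⟨⟨n, q, hqA, hq⟩, fun S hAS hS => ⟨q + n • (k, 0), ?_, ?_⟩⟩
  · exact (periodic_mem_of_forall_mem_iff hS).zsmul n q ▸ hAS hqA
  · simpa [zsmul_eq_mul] using hq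

/-- Quantitative step of the Agol–Futer lemma: a connected set below the horizontal axis
whose endpoints have heights `y₀ < y₁ < 0` and horizontal extent less than `k` has a
horizontal `ℤ·k`-translate meeting the line of slope `-r` through the origin whenever
`0 < r < (y₁ - y₀)/(2k)`. -/
theorem agol_futer_quantitative
    (k : ℝ) (hk : 0 < k) (A : Set (ℝ × ℝ)) (hA : IsConnected A)
    (x₀ y₀ x₁ y₁ : ℝ) (h₀ : (x₀, y₀) ∈ A) (h₁ : (x₁, y₁) ∈ A)
    (hy₀ : y₀ < y₁) (hy₁ : y₁ < 0) (hx : |x₁ - x₀| < k) :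
    ∀ r : ℝ, 0 < r → r < (y₁ - y₀) / (2 * k) →
      (∃ n : ℤ, ∃ q ∈ A, q.2 = -r * (q.1 + n * k)) ∧
      (∀ S : Set (ℝ × ℝ), A ⊆ S → (∀ q : ℝ × ℝ, q ∈ S ↔ (q.1 + k, q.2) ∈ S) →
        ∃ q ∈ S, q.2 = -r * q.1) :=
  agol_futer_quantitative_general k hk A hA x₀ y₀ x₁ y₁ h₀ h₁ hx
end
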